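/- Let S and S̄ be filtered λ-ring structures on ℤ[x]/(x³) with Adams operations ψ_p^S(x) = b_p x + c_p x² and ψ_p^{S̄}(x) = b̄_p x + c̄_p x² (p ranging over the primes). Then S and S̄ are isomorphic if and only if the following two conditions hold simultaneously: (1) b_p = b̄_p for all primes p; (2)(a) if b₂ = b̄₂ = 0, then there exists u ∈ {1, −1} such that c_p = u·c̄_p for all primes p, while (2)(b) if b₂ = b̄₂ ≠ 0, then there exist u ∈ {1, −1} and an integer a such that a·b₂(b₂ − 1) = c₂ − u·c̄₂. -/

import Mathlib

open Polynomial

noncomputable section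

/-- The truncated polynomial ring `ℤ[x]/(xⁿ)`. -/
abbrev TP (n : ℕ) : Type := Polynomial ℤ ⧸ Ideal.span {(X : Polynomial ℤ) ^ n}

/-- The class of `x` in `ℤ[x]/(xⁿ)`. -/
def xx (n : ℕ) : TP n := Ideal.Quotient.mk _ (X : Polynomial ℤ)

/-- A filtered λ-ring structure on `ℤ[x]/(xⁿ)`, presented (via Wilkerson's theorem) as a
family of Adams operations `ψ p`, indexed by the primes `p`: each `ψ p` is a ring
endomorphism preserving the filtration ideal `(x)`, they pairwise commute, and
`ψ p r ≡ r ^ p (mod p)`. -/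
structure AdamsFamily (n : ℕ) : Type where
  ψ : Nat.Primes → (TP n →+* TP n)
  maps_ideal : ∀ (p : Nat.Primes), ∀ a ∈ Ideal.span {xx n}, ψ p a ∈ Ideal.span {xx n}
  comm : ∀ p q : Nat.Primes, (ψ p).comp (ψ q) = (ψ q).comp (ψ p)
  frob : ∀ (p : Nat.Primes) (a : TP n),
    ψ p a - a ^ (p : ℕ) ∈ Ideal.span {((p : ℕ) : TP n)}

/-- Isomorphism of filtered λ-ring structures on `ℤ[x]/(xⁿ)`: a filtration-preserving ring
automorphism intertwining the Adams operations. -/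
def AdamsIso {n : ℕ} (R S : AdamsFamily n) : Prop :=
  ∃ σ : TP n ≃+* TP n,
    (Ideal.span {xx n}).map σ.toRingHom = Ideal.span {xx n} ∧
    ∀ p : Nat.Primes, σ.toRingHom.comp (R.ψ p) = (S.ψ p).comp σ.toRingHom

/-- The prime 2 as an element of `Nat.Primes`. -/
def P2 : Nat.Primes := ⟨2, Nat.prime_two⟩

/-- The prime 3 as an element of `Nat.Primes`. -/
def P3 : Nat.Primes := ⟨3, Nat.prime_three⟩

/-!
A filtration-preserving endomorphism of `ℤ[x]/(x³)` is determined by `x ↦ b x + c x²`, and these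
substitutions compose by `(b', c') ∘ (b, c) = (b b', b c' + c b'²)`. Hence `ψ_p` is the substitution
`(b_p, c_p)`, a filtration-preserving automorphism is a substitution `(u, v)` with `u = ±1`, and it
conjugates `ψ^S` into `ψ^S̄` exactly when `b_p = b̄_p` and `c_p = u c̄_p + v (b_p² - b_p)` for all `p`.
Commutativity of the `ψ_p` gives `c_q (b_p² - b_p) = c_p (b_q² - b_q)`, and `ψ_2(x) ≡ x² mod 2` makes
`b_2` even and `c_2` odd. So if `b_2 = 0` then every `b_p² - b_p` vanishes, and otherwise
`b_2² - b_2 ≠ 0` and the twist at `p = 2` determines it at every `p`.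
-/

theorem xx_pow_self (n : ℕ) : xx n ^ n = 0 :=
  AdjoinRoot.mk_self

theorem TP.ringHom_ext {n : ℕ} {R : Type*} [Semiring R] {f g : TP n →+* R}
    (h : f (xx n) = g (xx n)) : f = g :=
  Ideal.Quotient.ringHom_ext (ringHom_ext' (RingHom.ext_int _ _) h)

def TP.lift {n : ℕ} {R : Type*} [CommRing R] (t : R) (ht : t ^ n = 0) : TP n →+* R :=
  AdjoinRoot.lift (Int.castRingHom R) t (by simp [ht])

theorem TP.lift_xx {n : ℕ} {R : Type*} [CommRing R] (t : R) (ht : t ^ n = 0) :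
    TP.lift t ht (xx n) = t :=
  AdjoinRoot.lift_root _

def linQuad (b c : ℤ) : TP 3 := (b : TP 3) * xx 3 + (c : TP 3) * xx 3 ^ 2

theorem mk_eq_intCast_add_linQuad (a b c : ℤ) :
    Ideal.Quotient.mk _ (C a + C b * X + C c * X ^ 2) = (a : TP 3) + linQuad b c := by
  simp [linQuad, xx, add_assoc]

theorem exists_eq_intCast_add_linQuad (z : TP 3) :
    ∃ a b c : ℤ, z = (a : TP 3) + linQuad b c := by
  obtain ⟨P, rfl⟩ := Ideal.Quotient.mk_surjective z
  set r := P %ₘ X ^ 3 with hr_def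
  have hPr : Ideal.Quotient.mk _ r = Ideal.Quotient.mk (Ideal.span {X ^ 3}) P := by
    rw [Ideal.Quotient.eq, Ideal.mem_span_singleton, hr_def, modByMonic_eq_sub_mul_div]
    exact ⟨-(P /ₘ X ^ 3), by ring⟩
  have hr : r.natDegree < 3 := by
    simpa using natDegree_modByMonic_lt P (monic_X_pow 3)
      (fun h => by simpa using congrArg natDegree h)
  refine ⟨r.coeff 0, r.coeff 1, r.coeff 2, ?_⟩
  rw [← mk_eq_intCast_add_linQuad, ← hPr]
  congr 1
  conv_lhs => rw [r.as_sum_range' 3 hr]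
  simp only [Finset.sum_range_succ, Finset.sum_range_zero, zero_add, ← C_mul_X_pow_eq_monomial,
    pow_zero, mul_one, pow_one]

theorem intCast_add_linQuad_inj {a b c a' b' c' : ℤ}
    (h : (a : TP 3) + linQuad b c = (a' : TP 3) + linQuad b' c') :
    a = a' ∧ b = b' ∧ c = c' := by
  rw [← mk_eq_intCast_add_linQuad, ← mk_eq_intCast_add_linQuad, Ideal.Quotient.eq,
    Ideal.mem_span_singleton, X_pow_dvd_iff] at h
  have h0 := h 0 (by norm_num)
  have h1 := h 1 (by norm_num)
  have h2 := h 2 (by norm_num)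
  simp only [coeff_sub, coeff_add, coeff_C, coeff_C_mul, coeff_X, coeff_X_pow] at h0 h1 h2
  norm_num [sub_eq_zero] at h0 h1 h2
  exact ⟨h0, h1, h2⟩

theorem linQuad_inj {b c b' c' : ℤ} : linQuad b c = linQuad b' c' ↔ b = b' ∧ c = c' := by
  refine ⟨fun h => (intCast_add_linQuad_inj (a := 0) (a' := 0) ?_).2, ?_⟩
  · simpa using h
  · rintro ⟨rfl, rfl⟩
    rfl

theorem linQuad_one_zero : linQuad 1 0 = xx 3 := by
  simp [linQuad]

theorem exists_eq_linQuad_of_mem_span_xx {z : TP 3} (hz : z ∈ Ideal.span {xx 3}) :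
    ∃ b c : ℤ, z = linQuad b c := by
  obtain ⟨t, rfl⟩ := Ideal.mem_span_singleton'.1 hz
  obtain ⟨a, b, c, rfl⟩ := exists_eq_intCast_add_linQuad t
  refine ⟨a, b, ?_⟩
  simp only [linQuad]
  linear_combination (c : TP 3) * xx_pow_self 3

theorem dvd_of_linQuad_mem_span_intCast {n b c : ℤ}
    (h : linQuad b c ∈ Ideal.span {(n : TP 3)}) : n ∣ b ∧ n ∣ c := by
  obtain ⟨t, ht⟩ := Ideal.mem_span_singleton.1 h
  obtain ⟨a, b', c', rfl⟩ := exists_eq_intCast_add_linQuad t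
  obtain ⟨-, hb, hc⟩ : 0 = n * a ∧ b = n * b' ∧ c = n * c' := by
    refine intCast_add_linQuad_inj ?_
    rw [Int.cast_zero, zero_add, ht]
    simp only [linQuad]
    push_cast
    ring
  exact ⟨⟨b', hb⟩, ⟨c', hc⟩⟩

theorem linQuad_sq (b c : ℤ) : linQuad b c ^ 2 = linQuad 0 (b ^ 2) := by
  simp only [linQuad]
  push_cast
  linear_combination (2 * (b : TP 3) * c + (c : TP 3) ^ 2 * xx 3) * xx_pow_self 3

theorem linQuad_pow_three (b c : ℤ) : linQuad b c ^ 3 = 0 := by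
  simp only [linQuad]
  linear_combination ((b : TP 3) + c * xx 3) ^ 3 * xx_pow_self 3

def subst (b c : ℤ) : TP 3 →+* TP 3 := TP.lift (linQuad b c) (linQuad_pow_three b c)

theorem subst_xx (b c : ℤ) : subst b c (xx 3) = linQuad b c :=
  TP.lift_xx _ _

theorem eq_subst_of_apply_xx {f : TP 3 →+* TP 3} {b c : ℤ} (h : f (xx 3) = linQuad b c) :
    f = subst b c :=
  TP.ringHom_ext (h.trans (subst_xx b c).symm)

theorem subst_one_zero : subst 1 0 = RingHom.id (TP 3) :=
  (eq_subst_of_apply_xx linQuad_one_zero.symm).symm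

theorem subst_linQuad (b c B C : ℤ) :
    subst b c (linQuad B C) = linQuad (B * b) (B * c + C * b ^ 2) := by
  have h := linQuad_sq b c
  simp only [linQuad, map_add, map_mul, map_pow, map_intCast, subst_xx] at h ⊢
  rw [h]
  push_cast
  ring

theorem subst_comp_subst (b c b' c' : ℤ) :
    (subst b' c').comp (subst b c) = subst (b * b') (b * c' + c * b' ^ 2) :=
  eq_subst_of_apply_xx (by rw [RingHom.comp_apply, subst_xx, subst_linQuad])

theorem subst_inj {b c b' c' : ℤ} : subst b c = subst b' c' ↔ b = b' ∧ c = c' := by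
  refine ⟨fun h => linQuad_inj.1 ?_, by rintro ⟨rfl, rfl⟩; rfl⟩
  rw [← subst_xx, h, subst_xx]

theorem subst_comp_eq_comp_subst_iff {u v b c b' c' : ℤ} (hu : IsUnit u) :
    (subst u v).comp (subst b c) = (subst b' c').comp (subst u v) ↔
      b = b' ∧ c = u * c' + v * (b ^ 2 - b) := by
  have hu2 := Int.isUnit_mul_self hu
  rw [subst_comp_subst, subst_comp_subst, subst_inj]
  constructor
  · rintro ⟨h1, h2⟩
    obtain rfl : b = b' := by linear_combination u * h1 - (b - b') * hu2
    exact ⟨rfl, by linear_combination h2 - c * hu2⟩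
  · rintro ⟨rfl, rfl⟩
    exact ⟨by ring, by linear_combination (u * c' + v * (b ^ 2 - b)) * hu2⟩

def substEquiv (u v : ℤ) (hu : IsUnit u) : TP 3 ≃+* TP 3 :=
  RingEquiv.ofRingHom (subst u v) (subst u (-(u * v)))
    (by
      rw [subst_comp_subst, ← subst_one_zero, subst_inj]
      exact ⟨Int.isUnit_mul_self hu, by linear_combination -u * v * Int.isUnit_mul_self hu⟩)
    (by
      rw [subst_comp_subst, ← subst_one_zero, subst_inj]
      exact ⟨Int.isUnit_mul_self hu, by ring⟩)

theorem substEquiv_toRingHom (u v : ℤ) (hu : IsUnit u) :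
    (substEquiv u v hu).toRingHom = subst u v :=
  rfl

theorem map_span_xx_substEquiv (u v : ℤ) (hu : IsUnit u) :
    (Ideal.span {xx 3}).map (substEquiv u v hu).toRingHom = Ideal.span {xx 3} := by
  have hunit : IsUnit ((u : TP 3) + v * xx 3) := by
    refine IsNilpotent.isUnit_add_left_of_commute ⟨3, ?_⟩
      (by simpa using hu.map (Int.castRingHom (TP 3))) (Commute.all _ _)
    rw [mul_pow, xx_pow_self, mul_zero]
  rw [Ideal.map_span, Set.image_singleton, substEquiv_toRingHom, subst_xx,
    show linQuad u v = xx 3 * ((u : TP 3) + v * xx 3) by simp only [linQuad]; ring]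
  exact Ideal.span_singleton_mul_right_unit hunit _

theorem exists_subst_of_map_span_xx (σ : TP 3 ≃+* TP 3)
    (hσ : (Ideal.span {xx 3}).map σ.toRingHom = Ideal.span {xx 3}) :
    ∃ u v : ℤ, IsUnit u ∧ σ.toRingHom = subst u v := by
  have hx : xx 3 ∈ Ideal.span {xx 3} := Ideal.mem_span_singleton_self _
  obtain ⟨u, v, hσx⟩ := exists_eq_linQuad_of_mem_span_xx (hσ ▸ Ideal.mem_map_of_mem _ hx)
  have hσ_eq : σ.toRingHom = subst u v := eq_subst_of_apply_xx hσx
  obtain ⟨y, hy, hσy⟩ := (Ideal.mem_map_iff_of_surjective _ σ.surjective).1 (hσ.symm ▸ hx)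
  obtain ⟨u', v', rfl⟩ := exists_eq_linQuad_of_mem_span_xx hy
  replace hσy : subst u v (linQuad u' v') = linQuad 1 0 := by
    rw [← hσ_eq, linQuad_one_zero]
    exact hσy
  rw [subst_linQuad, linQuad_inj] at hσy
  exact ⟨u, v, IsUnit.of_mul_eq_one_right _ hσy.1, hσ_eq⟩

namespace AdamsFamily

variable (F : AdamsFamily 3) {b c : Nat.Primes → ℤ}

theorem coeff_comm_relation (hF : ∀ p, F.ψ p (xx 3) = linQuad (b p) (c p)) (p q : Nat.Primes) :
    c q * (b p ^ 2 - b p) = c p * (b q ^ 2 - b q) := by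
  have h := F.comm p q
  rw [eq_subst_of_apply_xx (hF p), eq_subst_of_apply_xx (hF q), subst_comp_subst,
    subst_comp_subst, subst_inj] at h
  linear_combination h.2

theorem two_dvd_coeff_two (hF : ∀ p, F.ψ p (xx 3) = linQuad (b p) (c p)) :
    2 ∣ b P2 ∧ 2 ∣ c P2 - 1 := by
  have h := F.frob P2 (xx 3)
  rw [hF P2, show ((P2 : ℕ)) = 2 from rfl,
    show linQuad (b P2) (c P2) - xx 3 ^ 2 = linQuad (b P2) (c P2 - 1) by
      simp only [linQuad]; push_cast; ring] at h
  exact dvd_of_linQuad_mem_span_intCast (by simpa using h)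

end AdamsFamily

theorem adamsIso_iff_exists_twist (S Sb : AdamsFamily 3) {b c bb cb : Nat.Primes → ℤ}
    (hS : ∀ p, S.ψ p (xx 3) = linQuad (b p) (c p))
    (hSb : ∀ p, Sb.ψ p (xx 3) = linQuad (bb p) (cb p)) :
    AdamsIso S Sb ↔
      ∃ u v : ℤ, IsUnit u ∧ ∀ p, b p = bb p ∧ c p = u * cb p + v * (b p ^ 2 - b p) := by
  have hψS : ∀ p, S.ψ p = subst (b p) (c p) := fun p => eq_subst_of_apply_xx (hS p)
  have hψSb : ∀ p, Sb.ψ p = subst (bb p) (cb p) := fun p => eq_subst_of_apply_xx (hSb p)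
  simp only [AdamsIso, hψS, hψSb]
  constructor
  · rintro ⟨σ, hσ, hcomm⟩
    obtain ⟨u, v, hu, hσu⟩ := exists_subst_of_map_span_xx σ hσ
    refine ⟨u, v, hu, fun p => (subst_comp_eq_comp_subst_iff hu).1 ?_⟩
    rw [← hσu]
    exact hcomm p
  · rintro ⟨u, v, hu, h⟩
    exact ⟨substEquiv u v hu, map_span_xx_substEquiv u v hu,
      fun p => (subst_comp_eq_comp_subst_iff hu).2 (h p)⟩

theorem exists_twist_iff {ι : Type*} (i : ι) {b c bb cb : ι → ℤ}
    (hc : ∀ p q, c q * (b p ^ 2 - b p) = c p * (b q ^ 2 - b q))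
    (hcb : ∀ p q, cb q * (bb p ^ 2 - bb p) = cb p * (bb q ^ 2 - bb q))
    (hbi : 2 ∣ b i) (hci : 2 ∣ c i - 1) :
    (∃ u v : ℤ, IsUnit u ∧ ∀ p, b p = bb p ∧ c p = u * cb p + v * (b p ^ 2 - b p)) ↔
      ((∀ p, b p = bb p) ∧
        ((b i = 0 ∧ bb i = 0) → ∃ u : ℤ, (u = 1 ∨ u = -1) ∧ ∀ p, c p = u * cb p) ∧
        ((b i = bb i ∧ b i ≠ 0) →
          ∃ u : ℤ, (u = 1 ∨ u = -1) ∧ ∃ a : ℤ, a * (b i * (b i - 1)) = c i - u * cb i)) := by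
  simp only [← Int.isUnit_iff]
  constructor
  · rintro ⟨u, v, hu, h⟩
    refine ⟨fun p => (h p).1, fun ⟨hb0, _⟩ => ⟨u, hu, fun p => ?_⟩, fun _ => ⟨u, hu, v, ?_⟩⟩
    · have hcp : c i * (b p ^ 2 - b p) = 0 := by rw [hc p i, hb0]; ring
      have hp : b p ^ 2 - b p = 0 := (mul_eq_zero.1 hcp).resolve_left (by omega)
      linear_combination (h p).2 + v * hp
    · linear_combination -(h i).2
  · rintro ⟨hbb, h0, h1⟩
    by_cases hb0 : b i = 0
    · obtain ⟨u, hu, h⟩ := h0 ⟨hb0, hbb i ▸ hb0⟩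
      exact ⟨u, 0, hu, fun p => ⟨hbb p, by rw [h p]; ring⟩⟩
    · obtain ⟨u, hu, a, ha⟩ := h1 ⟨hbb i, hb0⟩
      have hD : b i ^ 2 - b i ≠ 0 := by
        rw [sq, ← mul_sub_one]
        exact mul_ne_zero hb0 (by omega)
      refine ⟨u, a, hu, fun p => ⟨hbb p, mul_right_cancel₀ hD ?_⟩⟩
      have hcbp := hcb p i
      rw [← hbb p, ← hbb i] at hcbp
      linear_combination -hc p i + u * hcbp - (b p ^ 2 - b p) * ha

theorem stmt4 (S Sb : AdamsFamily 3) (b c bb cb : Nat.Primes → ℤ)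
    (hS : ∀ p : Nat.Primes, S.ψ p (xx 3) = (b p : TP 3) * xx 3 + (c p : TP 3) * xx 3 ^ 2)
    (hSb : ∀ p : Nat.Primes, Sb.ψ p (xx 3) = (bb p : TP 3) * xx 3 + (cb p : TP 3) * xx 3 ^ 2) :
    AdamsIso S Sb ↔
      ((∀ p : Nat.Primes, b p = bb p) ∧
       ((b P2 = 0 ∧ bb P2 = 0) →
          ∃ u : ℤ, (u = 1 ∨ u = -1) ∧ ∀ p : Nat.Primes, c p = u * cb p) ∧
       ((b P2 = bb P2 ∧ b P2 ≠ 0) →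
          ∃ u : ℤ, (u = 1 ∨ u = -1) ∧
            ∃ a : ℤ, a * (b P2 * (b P2 - 1)) = c P2 - u * cb P2)) := by
  obtain ⟨hb2, hc2⟩ := S.two_dvd_coeff_two hS
  rw [adamsIso_iff_exists_twist S Sb hS hSb]
  exact exists_twist_iff P2 (S.coeff_comm_relation hS) (Sb.coeff_comm_relation hSb) hb2 hc2
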